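/- Let P be a partial order and equip P with the Alexandrov topology whose open sets are the upper sets of P. Then P (as a topological space) is sober if and only if every nonempty subset of P has a maximal element (P is co-well-founded). -/

import Mathlib

/-!
Open sets are upper sets, so closed sets are lower sets, the closure of `{x}` is `Iic x`, and a
set is irreducible exactly when it is nonempty and directed. Hence the space is sober iff every
nonempty directed set has a greatest element. Under co-well-foundedness a maximal element of a
directed set is greatest; conversely, the greatest element of the range of an increasing sequence
stabilises it, which is the ascending chain condition.
-/

/-- The Alexandrov topology on a preorder, whose open sets are the upper sets. -/
def alexandrovUpper (P : Type*) [Preorder P] : TopologicalSpace P where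
  IsOpen s := IsUpperSet s
  isOpen_univ := isUpperSet_univ
  isOpen_inter _ _ hs ht := hs.inter ht
  isOpen_sUnion _ h := isUpperSet_sUnion h

theorem DirectedOn.exists_isGreatest_of_wellFoundedGT {α : Type*} [Preorder α] [WellFoundedGT α]
    {s : Set α} (hne : s.Nonempty) (hd : DirectedOn (· ≤ ·) s) : ∃ x, IsGreatest s x := by
  obtain ⟨m, hm⟩ := WellFoundedGT.exists_maximal ‹_› s hne
  refine ⟨m, hm.prop, fun x hx => ?_⟩
  obtain ⟨c, hc, hxc, hmc⟩ := hd x hx m hm.prop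
  exact hxc.trans (hm.le_of_ge hc hmc)

theorem wellFoundedGT_iff_forall_directedOn_exists_isGreatest {α : Type*} [Preorder α] :
    WellFoundedGT α ↔
      ∀ s : Set α, s.Nonempty → DirectedOn (· ≤ ·) s → ∃ x, IsGreatest s x := by
  refine ⟨fun _ s => DirectedOn.exists_isGreatest_of_wellFoundedGT, fun h => ?_⟩
  refine wellFoundedGT_iff_monotone_chain_condition'.2 fun a => ?_
  obtain ⟨_, ⟨n, rfl⟩, hn⟩ := h (Set.range a) (Set.range_nonempty a)
    (directedOn_range.2 a.monotone.directed_le)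
  exact ⟨n, fun m _ => (hn ⟨m, rfl⟩).not_gt⟩

namespace Topology.IsUpperSet

section Preorder

variable {α : Type*} [Preorder α] [TopologicalSpace α] [Topology.IsUpperSet α]

theorem isIrreducible_iff {s : Set α} :
    IsIrreducible s ↔ s.Nonempty ∧ DirectedOn (· ≤ ·) s := by
  refine and_congr_right fun _ => ⟨fun h x hxs y hys => ?_,
    fun hd u v hu hv ⟨x, hxs, hxu⟩ ⟨y, hys, hyv⟩ => ?_⟩
  · obtain ⟨z, hzs, hxz, hyz⟩ := h (Set.Ici x) (Set.Ici y)
      (isOpen_iff_isUpperSet.2 (isUpperSet_Ici x)) (isOpen_iff_isUpperSet.2 (isUpperSet_Ici y))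
      ⟨x, hxs, le_rfl⟩ ⟨y, hys, le_rfl⟩
    exact ⟨z, hzs, hxz, hyz⟩
  · obtain ⟨z, hzs, hxz, hyz⟩ := hd x hxs y hys
    exact ⟨z, hzs, isOpen_iff_isUpperSet.1 hu hxz hxu, isOpen_iff_isUpperSet.1 hv hyz hyv⟩

theorem isGenericPoint_iff {x : α} {s : Set α} : IsGenericPoint x s ↔ Set.Iic x = s := by
  rw [isGenericPoint_def, closure_singleton]

theorem quasiSober_iff :
    QuasiSober α ↔ ∀ s : Set α, s.Nonempty → DirectedOn (· ≤ ·) s → ∃ x, IsGreatest s x := by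
  refine ⟨fun _ s hne hd => ?_, fun h => ⟨fun {s} hs hcl => ?_⟩⟩
  · have hirr : IsIrreducible (closure s) :=
      isIrreducible_iff_closure.2 (isIrreducible_iff.2 ⟨hne, hd⟩)
    obtain ⟨x, hx⟩ := QuasiSober.sober hirr isClosed_closure
    rw [isGenericPoint_iff, closure_eq_lowerClosure] at hx
    obtain ⟨a, has, hxa⟩ : x ∈ lowerClosure s := by rw [← SetLike.mem_coe, ← hx]; exact le_rfl
    have hle : ∀ b ∈ s, b ≤ x := fun b hb => by
      rw [← Set.mem_Iic, hx]; exact subset_lowerClosure hb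
    exact ⟨a, has, fun b hb => (hle b hb).trans hxa⟩
  · obtain ⟨x, hxs, hx⟩ := h s hs.nonempty (isIrreducible_iff.1 hs).2
    exact ⟨x, isGenericPoint_iff.2 <| Set.Subset.antisymm
      (fun y hy => isClosed_iff_isLower.1 hcl hy hxs) hx⟩

end Preorder

theorem t0Space {α : Type*} [PartialOrder α] [TopologicalSpace α] [Topology.IsUpperSet α] :
    T0Space α :=
  ⟨fun _ _ h => le_antisymm (specializes_iff_le.1 h.specializes')
    (specializes_iff_le.1 h.specializes)⟩

end Topology.IsUpperSet

instance alexandrovUpper.isUpperSet {α : Type*} [Preorder α] :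
    @Topology.IsUpperSet α (alexandrovUpper α) _ :=
  @Topology.IsUpperSet.mk _ (alexandrovUpper _) _ rfl

/-- A poset with the Alexandrov (upper set) topology is sober iff every nonempty subset
has a maximal element. -/
theorem alexandrov_sober_iff_coWellFounded (P : Type*) [PartialOrder P] :
    (letI := alexandrovUpper P; (QuasiSober P ∧ T0Space P)) ↔
      ∀ S : Set P, S.Nonempty → ∃ m ∈ S, ∀ x ∈ S, m ≤ x → x = m := by
  let := alexandrovUpper P
  rw [and_iff_left Topology.IsUpperSet.t0Space, Topology.IsUpperSet.quasiSober_iff,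
    ← wellFoundedGT_iff_forall_directedOn_exists_isGreatest,
    WellFounded.wellFoundedGT_iff_exists_maximal]
  simp [maximal_iff, eq_comm]
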